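/- Let m, N be positive integers, let A ∈ ℝ^{m×N}, b ∈ ℝ^m, let W ∈ ℝ^{m×m} be symmetric positive definite, let γ > 0, v ∈ ℝ^N, β ∈ ℝ, and suppose M = A^T W A is symmetric positive definite with R = M^{−1}. Let Λ̂ = 1_N + R A^T W b be the batch weighted least-squares estimate. Form the augmented data A' by appending the row v^T to A, b' by appending β to b, and W' as the block-diagonal matrix with blocks γW and 1, and set M' = A'^T W' A' (which is invertible) with R' = M'^{−1}. Then the recursively updated estimate Λ̂' := Λ̂ + R' v (β − v^T (Λ̂ − 1_N)) satisfies Λ̂' = 1_N + R' A'^T W' b'; that is, the recursive update reproduces the batch weighted least-squares estimate on the augmented data. -/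

import Mathlib

/-!
Down-weighting the old data by `γ` and appending the row `vᵀ` with weight `1` gives
`M' = γ M + v vᵀ` and `A'ᵀ W' b' = γ Aᵀ W b + β v`; in particular `M'` is positive
definite. Since `M (Λ̂ - 1) = Aᵀ W b`, also `M' (Λ̂ - 1) = γ Aᵀ W b + (vᵀ (Λ̂ - 1)) v`,
and applying `R' = M'⁻¹` to this identity is exactly the recursive update.
-/

open Matrix

namespace Matrix

section AppendRow

variable {R : Type*} [CommSemiring R] {m : ℕ} {n : Type*}
  {A : Matrix (Fin m) n R} {A' : Matrix (Fin (m + 1)) n R} {v : n → R}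

theorem init_mulVec_of_appendRow [Fintype n] (hA'c : ∀ i j, A' i.castSucc j = A i j)
    (x : n → R) :
    Fin.init (A' *ᵥ x) = A *ᵥ x := by
  ext i
  simp only [Fin.init, mulVec, dotProduct, hA'c]

theorem mulVec_last_of_appendRow [Fintype n] (hA'l : ∀ j, A' (Fin.last m) j = v j) (x : n → R) :
    (A' *ᵥ x) (Fin.last m) = v ⬝ᵥ x := by
  simp only [mulVec, dotProduct, hA'l]

theorem transpose_mulVec_of_appendRow (hA'c : ∀ i j, A' i.castSucc j = A i j)
    (hA'l : ∀ j, A' (Fin.last m) j = v j) (y : Fin (m + 1) → R) :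
    A'ᵀ *ᵥ y = Aᵀ *ᵥ Fin.init y + y (Fin.last m) • v := by
  ext j
  simp [mulVec, dotProduct, Fin.sum_univ_castSucc, hA'c, hA'l, Fin.init, mul_comm]

end AppendRow

section BlockDiagonal

variable {R : Type*} [CommSemiring R] {m : ℕ}
  {W : Matrix (Fin m) (Fin m) R} {W' : Matrix (Fin (m + 1)) (Fin (m + 1)) R} {γ : R}

theorem init_mulVec_of_blockDiag (hW'c : ∀ i j, W' i.castSucc j.castSucc = γ * W i j)
    (hW'cl : ∀ i : Fin m, W' i.castSucc (Fin.last m) = 0) (y : Fin (m + 1) → R) :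
    Fin.init (W' *ᵥ y) = γ • (W *ᵥ Fin.init y) := by
  ext i
  simp [Fin.init, mulVec, dotProduct, Fin.sum_univ_castSucc, hW'c, hW'cl, Finset.mul_sum, mul_assoc]

theorem mulVec_last_of_blockDiag (hW'lc : ∀ j : Fin m, W' (Fin.last m) j.castSucc = 0)
    (hW'll : W' (Fin.last m) (Fin.last m) = 1) (y : Fin (m + 1) → R) :
    (W' *ᵥ y) (Fin.last m) = y (Fin.last m) := by
  simp [mulVec, dotProduct, Fin.sum_univ_castSucc, hW'lc, hW'll]

end BlockDiagonal

section AppendMeasurement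

variable {R : Type*} [CommSemiring R] {m : ℕ} {n : Type*}
  {A : Matrix (Fin m) n R} {A' : Matrix (Fin (m + 1)) n R} {v : n → R}
  {W : Matrix (Fin m) (Fin m) R} {W' : Matrix (Fin (m + 1)) (Fin (m + 1)) R} {γ : R}

theorem transpose_mulVec_mulVec_of_appendMeasurement (hA'c : ∀ i j, A' i.castSucc j = A i j)
    (hA'l : ∀ j, A' (Fin.last m) j = v j) (hW'c : ∀ i j, W' i.castSucc j.castSucc = γ * W i j)
    (hW'cl : ∀ i : Fin m, W' i.castSucc (Fin.last m) = 0)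
    (hW'lc : ∀ j : Fin m, W' (Fin.last m) j.castSucc = 0)
    (hW'll : W' (Fin.last m) (Fin.last m) = 1) (y : Fin (m + 1) → R) :
    A'ᵀ *ᵥ (W' *ᵥ y) = γ • (Aᵀ *ᵥ (W *ᵥ Fin.init y)) + y (Fin.last m) • v := by
  rw [transpose_mulVec_of_appendRow hA'c hA'l, init_mulVec_of_blockDiag hW'c hW'cl,
    mulVec_last_of_blockDiag hW'lc hW'll, mulVec_smul]

theorem transpose_mul_mul_of_appendMeasurement [Fintype n] [DecidableEq n]
    (hA'c : ∀ i j, A' i.castSucc j = A i j)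
    (hA'l : ∀ j, A' (Fin.last m) j = v j) (hW'c : ∀ i j, W' i.castSucc j.castSucc = γ * W i j)
    (hW'cl : ∀ i : Fin m, W' i.castSucc (Fin.last m) = 0)
    (hW'lc : ∀ j : Fin m, W' (Fin.last m) j.castSucc = 0)
    (hW'll : W' (Fin.last m) (Fin.last m) = 1) :
    A'ᵀ * W' * A' = γ • (Aᵀ * W * A) + vecMulVec v v := by
  refine mulVec_injective (funext fun x => ?_)
  rw [← mulVec_mulVec, ← mulVec_mulVec, transpose_mulVec_mulVec_of_appendMeasurement hA'c hA'l
    hW'c hW'cl hW'lc hW'll, init_mulVec_of_appendRow hA'c, mulVec_last_of_appendRow hA'l,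
    add_mulVec, smul_mulVec, mulVec_mulVec, mulVec_mulVec, vecMulVec_mulVec, op_smul_eq_smul]

end AppendMeasurement

theorem PosDef.smul_add_vecMulVec_self {n : Type*} [Fintype n] {M : Matrix n n ℝ} (hM : M.PosDef)
    {γ : ℝ} (hγ : 0 < γ) (v : n → ℝ) : (γ • M + vecMulVec v v).PosDef :=
  (hM.smul hγ).add_posSemidef (posSemidef_vecMulVec_self_star v)

theorem inv_mulVec_smul_add_eq_add_inv_mulVec {K : Type*} [Field K] {n : Type*} [Fintype n]
    [DecidableEq n] {M M' : Matrix n n K} {γ : K} {v d c : n → K}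
    (hM' : M' = γ • M + vecMulVec v v) (hunit : IsUnit M'.det) (hd : M *ᵥ d = c) (β : K) :
    M'⁻¹ *ᵥ (γ • c + β • v) = d + (β - v ⬝ᵥ d) • (M'⁻¹ *ᵥ v) := by
  have hM'd : M' *ᵥ d = γ • c + (v ⬝ᵥ d) • v := by
    rw [hM', add_mulVec, smul_mulVec, hd, vecMulVec_mulVec, op_smul_eq_smul]
  have hM'inv : M'⁻¹ * M' = 1 := nonsing_inv_mul M' hunit
  calc M'⁻¹ *ᵥ (γ • c + β • v)
      = M'⁻¹ *ᵥ (M' *ᵥ d + (β - v ⬝ᵥ d) • v) := by rw [hM'd]; congr 1; module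
    _ = d + (β - v ⬝ᵥ d) • (M'⁻¹ *ᵥ v) := by
      rw [mulVec_add, mulVec_mulVec, hM'inv, one_mulVec, mulVec_smul]

end Matrix

theorem stmt7_general (m N : ℕ)
    (A : Matrix (Fin m) (Fin N) ℝ) (b : Fin m → ℝ)
    (W : Matrix (Fin m) (Fin m) ℝ)
    (γ : ℝ) (hγ : 0 < γ) (v : Fin N → ℝ) (β : ℝ)
    (M : Matrix (Fin N) (Fin N) ℝ) (hMdef : M = Aᵀ * W * A) (hM : M.PosDef)
    (R : Matrix (Fin N) (Fin N) ℝ) (hR : R = M⁻¹)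
    (Λhat : Fin N → ℝ)
    (hΛhat : Λhat = (fun _ => (1 : ℝ)) + R *ᵥ (Aᵀ *ᵥ (W *ᵥ b)))
    (A' : Matrix (Fin (m + 1)) (Fin N) ℝ)
    (hA'c : ∀ (i : Fin m) (j : Fin N), A' i.castSucc j = A i j)
    (hA'l : ∀ j : Fin N, A' (Fin.last m) j = v j)
    (b' : Fin (m + 1) → ℝ)
    (hb'c : ∀ i : Fin m, b' i.castSucc = b i)
    (hb'l : b' (Fin.last m) = β)
    (W' : Matrix (Fin (m + 1)) (Fin (m + 1)) ℝ)
    (hW'c : ∀ i j : Fin m, W' i.castSucc j.castSucc = γ * W i j)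
    (hW'cl : ∀ i : Fin m, W' i.castSucc (Fin.last m) = 0)
    (hW'lc : ∀ j : Fin m, W' (Fin.last m) j.castSucc = 0)
    (hW'll : W' (Fin.last m) (Fin.last m) = 1)
    (M' : Matrix (Fin N) (Fin N) ℝ) (hM'def : M' = A'ᵀ * W' * A')
    (R' : Matrix (Fin N) (Fin N) ℝ) (hR' : R' = M'⁻¹)
    (Λhat' : Fin N → ℝ)
    (hΛhat' : Λhat' = Λhat + (β - v ⬝ᵥ (Λhat - fun _ => (1 : ℝ))) • (R' *ᵥ v)) :
    IsUnit M'.det ∧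
      Λhat' = (fun _ => (1 : ℝ)) + R' *ᵥ (A'ᵀ *ᵥ (W' *ᵥ b')) := by
  have hM' : M' = γ • M + vecMulVec v v := by
    rw [hM'def, hMdef, transpose_mul_mul_of_appendMeasurement hA'c hA'l hW'c hW'cl hW'lc hW'll]
  have hunit : IsUnit M'.det :=
    (isUnit_iff_isUnit_det M').mp (hM' ▸ hM.smul_add_vecMulVec_self hγ v).isUnit
  have hinit : Fin.init b' = b := funext hb'c
  have hbatch : A'ᵀ *ᵥ (W' *ᵥ b') = γ • (Aᵀ *ᵥ (W *ᵥ b)) + β • v := by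
    rw [transpose_mulVec_mulVec_of_appendMeasurement hA'c hA'l hW'c hW'cl hW'lc hW'll, hinit, hb'l]
  have hold : M *ᵥ (Λhat - fun _ => 1) = Aᵀ *ᵥ (W *ᵥ b) := by
    rw [hΛhat, add_sub_cancel_left, hR, mulVec_mulVec,
      mul_nonsing_inv M ((isUnit_iff_isUnit_det M).mp hM.isUnit), one_mulVec]
  refine ⟨hunit, ?_⟩
  rw [hΛhat', hbatch, hR', inv_mulVec_smul_add_eq_add_inv_mulVec hM' hunit hold β]
  abel

/-- Correctness of the recursive weighted least-squares update: starting
from the batch WLS estimate `Λ̂ = 1_N + R Aᵀ W b` (with `M = AᵀWA` positive definite,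
`R = M⁻¹`), appending the new measurement pair `(v, β)` with forgetting factor `γ > 0`
(i.e. `A'` appends row `vᵀ` to `A`, `b'` appends `β` to `b`, `W' = diag(γW, 1)`), the
matrix `M' = A'ᵀ W' A'` is invertible, and with `R' = M'⁻¹` the recursive update
`Λ̂' = Λ̂ + R' v (β − vᵀ(Λ̂ − 1_N))` equals the batch estimate `1_N + R' A'ᵀ W' b'`. -/
theorem stmt7 (m N : ℕ) (hm : 0 < m) (hN : 0 < N)
    (A : Matrix (Fin m) (Fin N) ℝ) (b : Fin m → ℝ)
    (W : Matrix (Fin m) (Fin m) ℝ) (hW : W.PosDef)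
    (γ : ℝ) (hγ : 0 < γ) (v : Fin N → ℝ) (β : ℝ)
    (M : Matrix (Fin N) (Fin N) ℝ) (hMdef : M = Aᵀ * W * A) (hM : M.PosDef)
    (R : Matrix (Fin N) (Fin N) ℝ) (hR : R = M⁻¹)
    (Λhat : Fin N → ℝ)
    (hΛhat : Λhat = (fun _ => (1 : ℝ)) + R *ᵥ (Aᵀ *ᵥ (W *ᵥ b)))
    (A' : Matrix (Fin (m + 1)) (Fin N) ℝ)
    (hA'c : ∀ (i : Fin m) (j : Fin N), A' i.castSucc j = A i j)
    (hA'l : ∀ j : Fin N, A' (Fin.last m) j = v j)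
    (b' : Fin (m + 1) → ℝ)
    (hb'c : ∀ i : Fin m, b' i.castSucc = b i)
    (hb'l : b' (Fin.last m) = β)
    (W' : Matrix (Fin (m + 1)) (Fin (m + 1)) ℝ)
    (hW'c : ∀ i j : Fin m, W' i.castSucc j.castSucc = γ * W i j)
    (hW'cl : ∀ i : Fin m, W' i.castSucc (Fin.last m) = 0)
    (hW'lc : ∀ j : Fin m, W' (Fin.last m) j.castSucc = 0)
    (hW'll : W' (Fin.last m) (Fin.last m) = 1)
    (M' : Matrix (Fin N) (Fin N) ℝ) (hM'def : M' = A'ᵀ * W' * A')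
    (R' : Matrix (Fin N) (Fin N) ℝ) (hR' : R' = M'⁻¹)
    (Λhat' : Fin N → ℝ)
    (hΛhat' : Λhat' = Λhat + (β - v ⬝ᵥ (Λhat - fun _ => (1 : ℝ))) • (R' *ᵥ v)) :
    IsUnit M'.det ∧
      Λhat' = (fun _ => (1 : ℝ)) + R' *ᵥ (A'ᵀ *ᵥ (W' *ᵥ b')) :=
  stmt7_general m N A b W γ hγ v β M hMdef hM R hR Λhat hΛhat A' hA'c hA'l b' hb'c hb'l W' hW'c
    hW'cl hW'lc hW'll M' hM'def R' hR' Λhat' hΛhat'
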